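/- arXiv:2406.04696 — 12 statements merged into one kernel-verified Lean document; each statement's English description precedes it below -/
import Mathlib

section
/- For every width w ≥ 1, every x : BitVec w, and every index i with 0 ≤ i < w, the i-th (least-significant-first) bit of x equals 1 if and only if 2^(w−1) ≤ᵤ 2^(w−i−1) · x; that is, x.getLsbD i = true ↔ 2^(w−1) ≤ (2^(w−i−1) * x).toNat. -/
/-! Multiplying by `2^(w-i-1)` is the left shift that moves bit `i` into the most significant
position, and the most significant bit of a `w`-bit word is set iff its value is at least
`2^(w-1)`. -/

namespace BitVec

theorem ofNat_two_pow_mul {w : ℕ} (x : BitVec w) (k : ℕ) :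
    BitVec.ofNat w (2 ^ k) * x = x <<< k := by
  rw [shiftLeft_eq_mul_twoPow, mul_comm]
  congr 1
  apply eq_of_toNat_eq
  rw [toNat_ofNat, toNat_twoPow]

theorem msb_shiftLeft_eq_getLsbD {w i : ℕ} (x : BitVec w) (hi : i < w) :
    (x <<< (w - i - 1)).msb = x.getLsbD i := by
  rw [msb_eq_getMsbD_zero, getMsbD_shiftLeft, zero_add, getMsbD_eq_getLsbD,
    decide_eq_true (by omega : w - i - 1 < w), Bool.true_and]
  congr 1
  omega

end BitVec

theorem getLsbD_iff_shift_mul_ge_general (w : ℕ) (x : BitVec w) (i : ℕ) (hi : i < w) :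
    x.getLsbD i = true ↔ 2 ^ (w - 1) ≤ (BitVec.ofNat w (2 ^ (w - i - 1)) * x).toNat := by
  rw [BitVec.ofNat_two_pow_mul, ← BitVec.msb_shiftLeft_eq_getLsbD x hi, BitVec.msb_eq_decide,
    decide_eq_true_iff]

/-- Bit extraction as an unsigned inequality: `x[i] ↔ 2^(w-1) ≤ᵤ 2^(w-i-1)·x`. -/
theorem getLsbD_iff_shift_mul_ge (w : ℕ) (hw : 1 ≤ w) (x : BitVec w) (i : ℕ) (hi : i < w) :
    x.getLsbD i = true ↔ 2 ^ (w - 1) ≤ (BitVec.ofNat w (2 ^ (w - i - 1)) * x).toNat :=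
  getLsbD_iff_shift_mul_ge_general w x i hi
end

section
/- Correctness of the PolySAT division axioms: for all x, y : BitVec w with y ≠ 0, letting q := x.udiv y (so q.toNat = x.toNat / y.toNat) and r := x.umod y (so r.toNat = x.toNat % y.toNat), the following all hold: (1) x = q·y + r; (2) ¬Ovfl×(q, y); (3) ¬Ovfl+((q·y), r); (4) r <ᵤ y. -/
/-- Correctness of the PolySAT division axioms. -/
theorem polysat_division_axioms (w : ℕ) (x y : BitVec w) (hy : y ≠ 0) :
    x = x.udiv y * y + x.umod y ∧
    ¬ (2 ^ w ≤ (x.udiv y).toNat * y.toNat) ∧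
    ¬ (2 ^ w ≤ (x.udiv y * y).toNat + (x.umod y).toNat) ∧
    x.umod y < y := by
  have hud : x.udiv y = x / y := rfl
  have hum : x.umod y = x % y := rfl
  rw [hud, hum]
  have hy' : 0 < y.toNat := by
    rcases Nat.eq_zero_or_pos y.toNat with h | h
    · exact absurd (BitVec.toNat_injective (by simp [h])) hy
    · exact h
  have hx := x.isLt
  have hqy : x.toNat / y.toNat * y.toNat ≤ x.toNat := Nat.div_mul_le_self _ _
  have h2 : ¬ (2 ^ w ≤ (x / y).toNat * y.toNat) := by
    rw [BitVec.toNat_udiv]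
    omega
  have hmul : (x / y * y).toNat = x.toNat / y.toNat * y.toNat := by
    rw [BitVec.toNat_mul, BitVec.toNat_udiv, Nat.mod_eq_of_lt (by omega)]
  have hdm : x.toNat / y.toNat * y.toNat + x.toNat % y.toNat = x.toNat := Nat.div_add_mod' x.toNat y.toNat
  have hmlt := Nat.mod_lt x.toNat hy'
  refine ⟨?_, h2, ?_, ?_⟩
  · apply BitVec.toNat_injective
    rw [BitVec.toNat_add, hmul, BitVec.toNat_umod, Nat.mod_eq_of_lt (by omega)]
    omega
  · rw [hmul, BitVec.toNat_umod]
    omega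
  · rw [BitVec.lt_def, BitVec.toNat_umod]
    exact Nat.mod_lt _ hy'
end

section
/- Forbidden-interval equivalences for linear inequalities with equal coefficients: for all a, x, q, s : BitVec w, with t := a·x: (i) if s ≠ −1 then (t + q ≤ᵤ s) ↔ t ∉ [s − q + 1, −q[; (ii) if q ≠ 0 then (q ≤ᵤ t + s) ↔ t ∉ [−s, q − s[; (iii) if q ≠ s then (t + q ≤ᵤ t + s) ↔ t ∉ [−s, −q[. -/
private lemma key_mod (n a b : ℕ) (ha : a < n) (hb : b < n) (hb0 : 0 < b) :
    ((n - b) + a) % n = if a < b then a + n - b else a - b := by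
  rcases lt_or_ge a b with h | h
  · rw [if_pos h, Nat.mod_eq_of_lt (by omega)]; omega
  · rw [if_neg (by omega)]
    have : (n - b) + a = (a - b) + n := by omega
    rw [this, Nat.add_mod_right, Nat.mod_eq_of_lt (by omega)]

private lemma toNat_neg_one (w : ℕ) : ((-1 : BitVec w)).toNat = 2 ^ w - 1 := by
  rw [BitVec.toNat_neg (1 : BitVec w)]
  rcases Nat.eq_zero_or_pos w with h | h
  · subst h; decide
  · have h2 : (2:ℕ) ≤ 2 ^ w := by
      calc (2:ℕ) = 2^1 := rfl
      _ ≤ 2^w := Nat.pow_le_pow_right (by norm_num) h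
    have h1 : BitVec.toNat (1 : BitVec w) = 1 := by
      simp [BitVec.toNat_ofNat, Nat.mod_eq_of_lt (by omega : 1 < 2^w)]
    rw [h1, Nat.mod_eq_of_lt (by omega)]

private lemma L1 (w:ℕ) (u d : BitVec w) (hd : d ≠ 0) : u - d ≤ u ↔ ¬ u < d := by
  have hu := u.isLt; have hdd := d.isLt
  have hd0 : 0 < d.toNat := by
    simp [BitVec.toNat_eq] at hd; omega
  simp only [BitVec.lt_def, BitVec.le_def, BitVec.toNat_sub]
  rw [key_mod _ _ _ hu hdd hd0]
  split <;> omega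

private lemma L2 (w:ℕ) (u e : BitVec w) (he : e ≠ 0) : u - e < -e ↔ ¬ u < e := by
  have hu := u.isLt; have hee := e.isLt
  have he0 : 0 < e.toNat := by
    simp [BitVec.toNat_eq] at he; omega
  have hneg : (-e) = 0 - e := by ring
  simp only [hneg, BitVec.lt_def, BitVec.le_def, BitVec.toNat_sub, BitVec.toNat_ofNat]
  rw [key_mod _ _ _ hu hee he0, key_mod _ _ _ (by simp) hee he0]
  split <;> split <;> simp_all <;> omega

private lemma L3 (w:ℕ) (u s : BitVec w) (hs : s ≠ -1) : u ≤ s ↔ u < s + 1 := by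
  have hu := u.isLt; have hss := s.isLt
  have hs1 : s.toNat + 1 < 2 ^ w := by
    rcases Nat.lt_or_ge (s.toNat + 1) (2 ^ w) with h | h
    · exact h
    · exfalso; apply hs
      apply BitVec.toNat_injective
      rw [toNat_neg_one]
      omega
  have hone : BitVec.toNat (1 : BitVec w) = 1 := by
    simp [BitVec.toNat_ofNat, Nat.mod_eq_of_lt (by omega : 1 < 2^w)]
  simp only [BitVec.lt_def, BitVec.le_def, BitVec.toNat_add, hone]
  rw [Nat.mod_eq_of_lt hs1]
  omega

/-- Membership in a wrapping half-open interval `[l, h[` over `BitVec w`. -/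
def inInterval {w : ℕ} (t l h : BitVec w) : Prop := t - l < h - l

/-- Forbidden-interval equivalences for linear inequalities with equal coefficients,
where `t := a·x`. -/
theorem forbidden_intervals_equal_coeffs (w : ℕ) (a x q s : BitVec w) :
    (s ≠ -1 → ((a * x + q ≤ s) ↔ ¬ inInterval (a * x) (s - q + 1) (-q))) ∧
    (q ≠ 0 → ((q ≤ a * x + s) ↔ ¬ inInterval (a * x) (-s) (q - s))) ∧
    (q ≠ s → ((a * x + q ≤ a * x + s) ↔ ¬ inInterval (a * x) (-s) (-q))) := by
  set t := a * x with ht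
  refine ⟨fun hs => ?_, fun hq => ?_, fun hqs => ?_⟩
  · have e1 : t - (s - q + 1) = (t + q) - (s + 1) := by ring
    have e2 : -q - (s - q + 1) = -(s + 1) := by ring
    have he : s + 1 ≠ 0 := fun h => hs (by linear_combination h)
    unfold inInterval
    rw [e1, e2, L2 w _ _ he, not_not, L3 w _ _ hs]
  · have e1 : t - (-s) = t + s := by ring
    have e2 : (q - s) - (-s) = q := by ring
    unfold inInterval
    rw [e1, e2, BitVec.not_lt]
  · have e1 : t - (-s) = t + s := by ring
    have e2 : -q - (-s) = s - q := by ring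
    have e3 : t + q = (t + s) - (s - q) := by ring
    have hd : s - q ≠ 0 := fun h => hqs (by linear_combination -h)
    unfold inInterval
    rw [e1, e2, e3, L1 w _ _ hd]
end

section
/- Encoding of slice equations as bit-vector inequalities: let w ≥ 1, let 0 ≤ l ≤ h < w, let x : BitVec w, let n : BitVec (h−l+1), and set k := w − h − 1. Then the sub-slice x[h:l] (bits h down to l of x, i.e. BitVec.extractLsb h l x) equals n if and only if 2^k · x − 2^(k+l) · n̄ <ᵤ 2^(k+l), where n̄ : BitVec w is the zero-extension of n to width w and all arithmetic and the comparison are in BitVec w. -/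
lemma slice_key (P L M s N r : ℕ) (hP : 0 < P) (hM : 0 < M) (hs : s < M) (hN : N < M) (hr : r < L) :
    (P*L*M - P*L*N + (P*L*s + P*r)) % (P*L*M) < P*L ↔ s = N := by
  have hL : 0 < L := lt_of_le_of_lt (Nat.zero_le r) hr
  have hpr : P*r < P*L := mul_lt_mul_of_pos_left hr hP
  rcases lt_trichotomy s N with hc | hc | hc
  · obtain ⟨d, hd⟩ : ∃ d, N = s + (d+1) := ⟨N - s - 1, by omega⟩
    subst hd
    have e1 : P*L*(s + (d+1)) = P*L*s + P*L*(d+1) := by ring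
    have e2 : P*L ≤ P*L*(d+1) := Nat.le_mul_of_pos_right _ (by omega)
    have e3 : P*L*s + P*L*(d+1) + P*L ≤ P*L*M := by
      have : P*L*(s + (d+1) + 1) ≤ P*L*M := Nat.mul_le_mul_left _ (by omega)
      calc P*L*s + P*L*(d+1) + P*L = P*L*(s + (d+1) + 1) := by ring
        _ ≤ P*L*M := this
    rw [e1]
    have hlt : P*L*M - (P*L*s + P*L*(d+1)) + (P*L*s + P*r) < P*L*M := by omega
    rw [Nat.mod_eq_of_lt hlt]
    omega
  · subst hc
    have e : P*L*M - P*L*s + (P*L*s + P*r) = P*L*M + P*r := by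
      have : P*L*s ≤ P*L*M := Nat.mul_le_mul_left _ (le_of_lt hs)
      omega
    rw [e, Nat.add_mod_left, Nat.mod_eq_of_lt]
    · simpa using hpr
    · calc P*r < P*L := hpr
        _ ≤ P*L*M := Nat.le_mul_of_pos_right _ hM
  · obtain ⟨d, hd⟩ : ∃ d, s = N + (d+1) := ⟨s - N - 1, by omega⟩
    subst hd
    have e1 : P*L*(N + (d+1)) = P*L*N + P*L*(d+1) := by ring
    have e2 : P*L ≤ P*L*(d+1) := Nat.le_mul_of_pos_right _ (by omega)
    have hNle : P*L*N ≤ P*L*M := Nat.mul_le_mul_left _ (le_of_lt hN)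
    have e3 : P*L*N + P*L*(d+1) + P*L ≤ P*L*M := by
      have : P*L*(N + (d+1)) ≤ P*L*(M-1) := Nat.mul_le_mul_left _ (by omega)
      have e4 : P*L*(M-1) + P*L = P*L*M := by
        have : P*L*(M-1) + P*L = P*L*((M-1)+1) := by ring
        rw [this]; congr 1; omega
      omega
    rw [e1]
    have e : P*L*M - P*L*N + (P*L*N + P*L*(d+1) + P*r) = P*L*M + (P*L*(d+1) + P*r) := by omega
    rw [e, Nat.add_mod_left, Nat.mod_eq_of_lt (by omega)]
    omega

/-- Encoding of slice equations as bit-vector inequalities: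
`x[h:l] = n ↔ 2^k·x − 2^(k+l)·n̄ <ᵤ 2^(k+l)` where `k = w − h − 1`. -/
theorem slice_eq_iff_inequality (w : ℕ) (hw : 1 ≤ w) (l h : ℕ) (hlh : l ≤ h) (hhw : h < w)
    (x : BitVec w) (n : BitVec (h - l + 1)) :
    BitVec.extractLsb h l x = n ↔
      BitVec.ofNat w (2 ^ (w - h - 1)) * x -
          BitVec.ofNat w (2 ^ ((w - h - 1) + l)) * (n.zeroExtend w) <
        BitVec.ofNat w (2 ^ ((w - h - 1) + l)) := by
  have hN := n.isLt
  rw [BitVec.toNat_eq, BitVec.lt_def, BitVec.toNat_sub, BitVec.toNat_mul, BitVec.toNat_mul,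
      BitVec.toNat_ofNat, BitVec.toNat_ofNat, BitVec.toNat_setWidth]
  simp only [BitVec.extractLsb, BitVec.extractLsb', BitVec.toNat_ofNat,
    Nat.shiftRight_eq_div_pow]
  set k := w - h - 1 with hkdef
  set X := x.toNat with hXdef
  set N := n.toNat with hNdef
  have hX := x.isLt
  -- clean up the % 2^w on constants
  have hkl : 2 ^ (k + l) % 2 ^ w = 2 ^ (k + l) :=
    Nat.mod_eq_of_lt (Nat.pow_lt_pow_right one_lt_two (by omega))
  have hk : 2 ^ k % 2 ^ w = 2 ^ k :=
    Nat.mod_eq_of_lt (Nat.pow_lt_pow_right one_lt_two (by omega))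
  have hNw : N % 2 ^ w = N :=
    Nat.mod_eq_of_lt (lt_of_lt_of_le hN (Nat.pow_le_pow_right (by norm_num) (by omega)))
  have hw2 : (2:ℕ) ^ w = 2 ^ k * 2 ^ l * 2 ^ (h - l + 1) := by
    rw [← pow_add, ← pow_add]; congr 1; omega
  have hklmul : (2:ℕ) ^ (k + l) = 2 ^ k * 2 ^ l := pow_add 2 k l
  have hklN : 2 ^ (k + l) * N % 2 ^ w = 2 ^ (k + l) * N := by
    apply Nat.mod_eq_of_lt
    rw [hw2, hklmul]
    exact mul_lt_mul_of_pos_left hN (by positivity)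
  -- split X's low bits
  have hx1 : 2 ^ k * X % 2 ^ w = 2 ^ k * (X % 2 ^ (h + 1)) := by
    conv_lhs => rw [show (2:ℕ) ^ w = 2 ^ k * 2 ^ (h + 1) by rw [← pow_add]; congr 1; omega]
    exact Nat.mul_mod_mul_left _ _ _
  set s := X / 2 ^ l % 2 ^ (h - l + 1) with hsdef
  set r := X % 2 ^ (h + 1) % 2 ^ l with hrdef
  have hdiv : X % 2 ^ (h + 1) / 2 ^ l = s := by
    rw [show (2:ℕ) ^ (h + 1) = 2 ^ l * 2 ^ (h - l + 1) by rw [← pow_add]; congr 1; omega]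
    exact Nat.mod_mul_right_div_self _ _ _
  have hY : X % 2 ^ (h + 1) = 2 ^ l * s + r := by
    conv_lhs => rw [← Nat.div_add_mod (X % 2 ^ (h + 1)) (2 ^ l)]
    rw [hdiv]
  have hx2 : 2 ^ k * (X % 2 ^ (h + 1)) = 2 ^ k * 2 ^ l * s + 2 ^ k * r := by
    rw [hY]; ring
  rw [hkl, hk, hNw, hklN, hx1, hx2, hklmul, hw2]
  have hs : s < 2 ^ (h - l + 1) := Nat.mod_lt _ (by positivity)
  have hr : r < 2 ^ l := Nat.mod_lt _ (by positivity)
  exact (slice_key (2 ^ k) (2 ^ l) (2 ^ (h - l + 1)) s N r (by positivity) (by positivity) hs hN hr).symm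
end

section
/- Correctness and maximality of the PolySAT upper-bound formula for inequalities with different coefficients: let w ≥ 1 and m := 2^w, and let p, q, r, s, x₀ be integers with 1 ≤ p < m, 1 ≤ r < m, p ≠ r, 0 ≤ x₀ < m. Set a := (p·x₀ + q) mod m and b := (r·x₀ + s) mod m, and assume a > b. Define δₕ := min(S) − 1, where S := {m − x₀, ⌈(m − a)/p⌉} ∪ {⌈(a − b)/(r − p)⌉ if r > p}. Then δₕ is the greatest integer δ satisfying all of: δ ≥ 0; x₀ + δ < m; and for every integer x with 0 ≤ x ≤ δ, m > a + p·x and a + p·x > b + r·x and b + r·x ≥ 0. -/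
private lemma lt_ceil_div_iff' {u v z : ℤ} (hv : 0 < v) :
    z < ⌈(u : ℚ) / (v : ℚ)⌉ ↔ z * v < u := by
  rw [Int.lt_ceil, lt_div_iff₀ (by exact_mod_cast hv)]
  exact_mod_cast Iff.rfl

/-- Correctness and maximality of the PolySAT upper-bound formula `δₕ` for linear
inequalities with different coefficients. -/
theorem polysat_upper_bound_formula (w : ℕ) (hw : 1 ≤ w) (p q r s x₀ : ℤ)
    (hp1 : 1 ≤ p) (hpm : p < 2 ^ w) (hr1 : 1 ≤ r) (hrm : r < 2 ^ w) (hpr : p ≠ r)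
    (hx₀ : 0 ≤ x₀) (hx₀m : x₀ < 2 ^ w)
    (a b : ℤ) (ha : a = (p * x₀ + q) % 2 ^ w) (hb : b = (r * x₀ + s) % 2 ^ w)
    (hab : a > b)
    (δh : ℤ)
    (hδh : δh =
      (if r > p then
        min (min ((2 ^ w : ℤ) - x₀) ⌈(((2 ^ w - a : ℤ) : ℚ) / ((p : ℤ) : ℚ))⌉)
          ⌈(((a - b : ℤ) : ℚ) / (((r - p : ℤ) : ℚ)))⌉
       else
        min ((2 ^ w : ℤ) - x₀) ⌈(((2 ^ w - a : ℤ) : ℚ) / ((p : ℤ) : ℚ))⌉) - 1) :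
    IsGreatest
      {δ : ℤ | 0 ≤ δ ∧ x₀ + δ < 2 ^ w ∧
        ∀ x : ℤ, 0 ≤ x → x ≤ δ →
          a + p * x < 2 ^ w ∧ b + r * x < a + p * x ∧ 0 ≤ b + r * x}
      δh := by
  have hm : (0:ℤ) < 2 ^ w := by positivity
  have hp0 : (0:ℤ) < p := hp1
  have ha0 : 0 ≤ a := ha ▸ Int.emod_nonneg _ (ne_of_gt hm)
  have ham : a < 2 ^ w := ha ▸ Int.emod_lt_of_pos _ hm
  have hb0 : 0 ≤ b := hb ▸ Int.emod_nonneg _ (ne_of_gt hm)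
  have hC2 : ∀ z : ℤ, z < ⌈(((2 ^ w - a : ℤ) : ℚ) / ((p : ℤ) : ℚ))⌉ ↔ z * p < 2 ^ w - a :=
    fun z => lt_ceil_div_iff' hp0
  by_cases hrp : r > p
  · have hC3 : ∀ z : ℤ, z < ⌈(((a - b : ℤ) : ℚ) / (((r - p : ℤ) : ℚ)))⌉ ↔
        z * (r - p) < a - b := fun z => lt_ceil_div_iff' (by linarith)
    rw [if_pos hrp] at hδh
    have h2 : δh < ⌈(((2 ^ w - a : ℤ) : ℚ) / ((p : ℤ) : ℚ))⌉ := by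
      have := min_le_right ((2 ^ w : ℤ) - x₀) ⌈(((2 ^ w - a : ℤ) : ℚ) / ((p : ℤ) : ℚ))⌉
      have := min_le_left (min ((2 ^ w : ℤ) - x₀) ⌈(((2 ^ w - a : ℤ) : ℚ) / ((p : ℤ) : ℚ))⌉)
        ⌈(((a - b : ℤ) : ℚ) / (((r - p : ℤ) : ℚ)))⌉
      omega
    have h1 : δh ≤ 2 ^ w - x₀ - 1 := by
      have := min_le_left ((2 ^ w : ℤ) - x₀) ⌈(((2 ^ w - a : ℤ) : ℚ) / ((p : ℤ) : ℚ))⌉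
      have := min_le_left (min ((2 ^ w : ℤ) - x₀) ⌈(((2 ^ w - a : ℤ) : ℚ) / ((p : ℤ) : ℚ))⌉)
        ⌈(((a - b : ℤ) : ℚ) / (((r - p : ℤ) : ℚ)))⌉
      omega
    have h3 : δh < ⌈(((a - b : ℤ) : ℚ) / (((r - p : ℤ) : ℚ)))⌉ := by
      have := min_le_right (min ((2 ^ w : ℤ) - x₀) ⌈(((2 ^ w - a : ℤ) : ℚ) / ((p : ℤ) : ℚ))⌉)
        ⌈(((a - b : ℤ) : ℚ) / (((r - p : ℤ) : ℚ)))⌉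
      omega
    have hg0 : 0 ≤ δh := by
      have c2 : (0:ℤ) < ⌈(((2 ^ w - a : ℤ) : ℚ) / ((p : ℤ) : ℚ))⌉ := by
        rw [hC2 0]; simpa using (by linarith : (0:ℤ) < 2 ^ w - a)
      have c3 : (0:ℤ) < ⌈(((a - b : ℤ) : ℚ) / (((r - p : ℤ) : ℚ)))⌉ := by
        rw [hC3 0]; simpa using (by linarith : (0:ℤ) < a - b)
      have c1 : (0:ℤ) < 2 ^ w - x₀ := by linarith
      rw [hδh]
      simp only [le_sub_iff_add_le, zero_add, le_min_iff]
      omega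
    constructor
    · refine ⟨hg0, by linarith, fun x hx hxδ => ?_⟩
      have hxc2 : x * p < 2 ^ w - a := (hC2 x).mp (by omega)
      have hxc3 : x * (r - p) < a - b := (hC3 x).mp (by omega)
      exact ⟨by linarith [mul_comm x p], by linarith [mul_sub x r p, mul_comm x r, mul_comm x p], by linarith [mul_nonneg (by linarith : (0:ℤ) ≤ r) hx]⟩
    · rintro δ ⟨hδ0, hδ1, hδ2⟩
      obtain ⟨e1, e2, e3⟩ := hδ2 δ hδ0 le_rfl
      have d2 : δ < ⌈(((2 ^ w - a : ℤ) : ℚ) / ((p : ℤ) : ℚ))⌉ := (hC2 δ).mpr (by linarith [mul_comm p δ])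
      have d3 : δ < ⌈(((a - b : ℤ) : ℚ) / (((r - p : ℤ) : ℚ)))⌉ := (hC3 δ).mpr (by linarith [mul_sub δ r p, mul_comm δ r, mul_comm δ p])
      rw [hδh]
      simp only [le_sub_iff_add_le, le_min_iff]
      omega
  · have hrp' : r < p := lt_of_le_of_ne (not_lt.mp hrp) (Ne.symm hpr)
    rw [if_neg hrp] at hδh
    have h2 : δh < ⌈(((2 ^ w - a : ℤ) : ℚ) / ((p : ℤ) : ℚ))⌉ := by
      have := min_le_right ((2 ^ w : ℤ) - x₀) ⌈(((2 ^ w - a : ℤ) : ℚ) / ((p : ℤ) : ℚ))⌉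
      omega
    have h1 : δh ≤ 2 ^ w - x₀ - 1 := by
      have := min_le_left ((2 ^ w : ℤ) - x₀) ⌈(((2 ^ w - a : ℤ) : ℚ) / ((p : ℤ) : ℚ))⌉
      omega
    have hg0 : 0 ≤ δh := by
      have c2 : (0:ℤ) < ⌈(((2 ^ w - a : ℤ) : ℚ) / ((p : ℤ) : ℚ))⌉ := by
        rw [hC2 0]; simpa using (by linarith : (0:ℤ) < 2 ^ w - a)
      have c1 : (0:ℤ) < 2 ^ w - x₀ := by linarith
      rw [hδh]
      simp only [le_sub_iff_add_le, zero_add, le_min_iff]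
      omega
    constructor
    · refine ⟨hg0, by linarith, fun x hx hxδ => ?_⟩
      have hxc2 : x * p < 2 ^ w - a := (hC2 x).mp (by omega)
      have hneg : x * (r - p) ≤ 0 := mul_nonpos_of_nonneg_of_nonpos hx (by linarith)
      exact ⟨by linarith [mul_comm x p], by linarith [mul_sub x r p, mul_comm x r, mul_comm x p], by linarith [mul_nonneg (by linarith : (0:ℤ) ≤ r) hx]⟩
    · rintro δ ⟨hδ0, hδ1, hδ2⟩
      obtain ⟨e1, e2, e3⟩ := hδ2 δ hδ0 le_rfl
      have d2 : δ < ⌈(((2 ^ w - a : ℤ) : ℚ) / ((p : ℤ) : ℚ))⌉ := (hC2 δ).mpr (by linarith [mul_comm p δ])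
      rw [hδh]
      simp only [le_sub_iff_add_le, le_min_iff]
      omega
end

section
/- Projection of a forbidden interval to the low sub-slice (Lemma 1, part 2): let u, v ≥ 1, let y : BitVec u, z : BitVec v, and l, h : BitVec (u+v), and consider the wrapping interval [l,h[ over BitVec (u+v) with length |[l,h[| := (h − l).toNat. If y ++ z ∉ [l,h[ and |[l,h[| > 2^(u+v) − 2^v, then z ∉ [l_z, h_z[ (a wrapping interval over BitVec v), where l_z, h_z : BitVec v satisfy l_z.toNat = l.toNat mod 2^v and h_z.toNat = h.toNat mod 2^v. -/
theorem BitVec.toNat_sub_eq_two_pow_sub {w : ℕ} {a b : BitVec w} (hab : a ≠ b) :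
    (b - a).toNat = 2 ^ w - (a - b).toNat := by
  have hpos : 0 < (a - b).toNat := by
    rw [Nat.pos_iff_ne_zero, Ne, ← BitVec.toNat_zero (w := w), BitVec.toNat_inj]
    exact sub_ne_zero.2 hab
  rw [← _root_.neg_sub a b, BitVec.toNat_neg, Nat.mod_eq_of_lt (by omega)]

theorem inInterval_swap_iff {w : ℕ} {t l h : BitVec w} (hlh : l ≠ h) :
    inInterval t h l ↔ ¬ inInterval t l h := by
  have hlen := BitVec.toNat_sub_eq_two_pow_sub hlh.symm
  have hoff : t - h = (t - l) - (h - l) := (sub_sub_sub_cancel_right t h l).symm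
  have htl := (t - l).isLt
  simp only [inInterval, BitVec.lt_def, hlen, hoff]
  by_cases hle : (h - l).toNat ≤ (t - l).toNat
  · rw [BitVec.toNat_sub_of_le (BitVec.le_def.2 hle)]
    omega
  · rw [BitVec.toNat_sub_of_lt (BitVec.lt_def.2 (by omega))]
    omega

theorem not_inInterval_of_inInterval_swap {w : ℕ} {t l h : BitVec w} (ht : inInterval t h l) :
    ¬ inInterval t l h := by
  rcases eq_or_ne l h with rfl | hlh
  · simp [inInterval]
  · exact (inInterval_swap_iff hlh).1 ht

theorem BitVec.setWidth_sub {w v : ℕ} (x y : BitVec w) (hv : v ≤ w) :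
    (x - y).setWidth v = x.setWidth v - y.setWidth v := by
  rw [sub_eq_add_neg, BitVec.setWidth_add _ _ hv, BitVec.setWidth_neg_of_le hv, ← sub_eq_add_neg]

theorem inInterval.setWidth {w v : ℕ} {t l h : BitVec w} (ht : inInterval t l h) (hv : v ≤ w)
    (hlen : (h - l).toNat < 2 ^ v) :
    inInterval (t.setWidth v) (l.setWidth v) (h.setWidth v) := by
  unfold inInterval at ht ⊢
  rw [BitVec.lt_def] at ht
  rw [← BitVec.setWidth_sub _ _ hv, ← BitVec.setWidth_sub _ _ hv, BitVec.lt_def,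
    BitVec.toNat_setWidth, BitVec.toNat_setWidth, Nat.mod_eq_of_lt hlen,
    Nat.mod_eq_of_lt (ht.trans hlen)]
  exact ht

theorem forbidden_interval_project_low_general (u v : ℕ)
    (y : BitVec u) (z : BitVec v) (l h : BitVec (u + v))
    (hnot : ¬ inInterval (y ++ z) l h)
    (hlen : 2 ^ (u + v) - 2 ^ v < (h - l).toNat) :
    ¬ inInterval z (BitVec.ofNat v (l.toNat % 2 ^ v)) (BitVec.ofNat v (h.toNat % 2 ^ v)) := by
  have hlh : l ≠ h := by
    rintro rfl
    simp at hlen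
  have hgap : (l - h).toNat < 2 ^ v := by
    rw [BitVec.toNat_sub_eq_two_pow_sub hlh.symm]
    omega
  have hlow := ((inInterval_swap_iff hlh).2 hnot).setWidth (Nat.le_add_left v u) hgap
  rw [BitVec.setWidth_append, dif_pos le_rfl, BitVec.setWidth_eq] at hlow
  apply not_inInterval_of_inInterval_swap
  simpa only [← BitVec.toNat_setWidth, BitVec.ofNat_toNat, BitVec.setWidth_eq] using hlow

/-- Projection of a forbidden interval to the low sub-slice (general intervals). -/
theorem forbidden_interval_project_low (u v : ℕ) (hu : 1 ≤ u) (hv : 1 ≤ v)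
    (y : BitVec u) (z : BitVec v) (l h : BitVec (u + v))
    (hnot : ¬ inInterval (y ++ z) l h)
    (hlen : 2 ^ (u + v) - 2 ^ v < (h - l).toNat) :
    ¬ inInterval z (BitVec.ofNat v (l.toNat % 2 ^ v)) (BitVec.ofNat v (h.toNat % 2 ^ v)) :=
  forbidden_interval_project_low_general u v y z l h hnot hlen
end

section
/- Projection of a forbidden interval when the low sub-slice is fixed (Lemma 2, parts (3)–(4)): let u, v ≥ 1, let n : BitVec v be fixed, let l, h : BitVec (u+v), and define, for β ∈ {l, h}, the bit-vector β_y : BitVec u by β_y.toNat = ⌈((β.toNat − n.toNat) mod 2^(u+v)) / 2^v⌉ mod 2^u. Then: (i) if l_y ≠ h_y, then for every y : BitVec u with y ++ n ∉ [l,h[ one has y ∉ [l_y, h_y[; (ii) if l_y = h_y and h_y ++ n ∈ [l,h[, then every y : BitVec u satisfies y ++ n ∈ [l,h[ (so the constraint x ∉ [l,h[ together with the fixed low slice n is unsatisfiable). -/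
/-- `βy n β` has `toNat` value `⌈((β.toNat − n.toNat) mod 2^(u+v)) / 2^v⌉ mod 2^u`,
where the difference is taken over the integers and `mod` is the nonnegative remainder. -/
def βy {u v : ℕ} (n : BitVec v) (β : BitVec (u + v)) : BitVec u :=
  BitVec.ofNat u
    ((((β.toNat + (2 ^ (u + v) - n.toNat)) % 2 ^ (u + v)) + (2 ^ v - 1)) / 2 ^ v)

namespace Int

variable {U V L a : ℤ}

theorem le_add_sub_one_ediv_mul (x : ℤ) (hV : 0 < V) : x ≤ (x + (V - 1)) / V * V := by
  have := lt_ediv_add_one_mul_self (x + (V - 1)) hV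
  linarith

theorem add_sub_one_ediv_mul_lt (x : ℤ) (hV : 0 < V) : (x + (V - 1)) / V * V < x + V := by
  have := Int.ediv_mul_le (x + (V - 1)) hV.ne'
  linarith

theorem mul_sub_emod_lt_iff (hU : 0 < U) (hV : 0 < V) (hLa : L ≤ a * V) (haL : a * V < L + V)
    {D b : ℤ} (hDb : D ≤ b * V) (hbD : b * V < D + V) (y : ℤ) :
    (y * V - L) % (U * V) < D - L ↔ (y - a) % U < b - a := by
  set k := (y - a) % U
  have hk0 : 0 ≤ k := emod_nonneg _ hU.ne'
  have hkU : k < U := emod_lt_of_pos _ hU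
  -- `(a + k) * V` is the representative of `y * V` in `[L, L + U * V)`.
  have hrep : (y * V - L) % (U * V) = (a + k) * V - L := by
    have hy : y * V - L = ((a + k) * V - L) + U * V * ((y - a) / U) := by
      linear_combination (-V) * emod_add_ediv_mul (y - a) U
    rw [hy, add_mul_emod_self_left]
    exact emod_eq_of_lt (by nlinarith) (by nlinarith)
  rw [hrep, sub_lt_sub_iff_right]
  constructor
  · intro h
    by_contra! hle
    nlinarith
  · intro h
    nlinarith

theorem exists_mul_sub_emod_lt_iff (hU : 0 < U) (hV : 0 < V) (hLa : L ≤ a * V)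
    (haL : a * V < L + V) {H b : ℤ} (hHb : H ≤ b * V) (hbH : b * V < H + V) :
    ∃ c, (c = (b - a) % U ∨ c = U) ∧
      ∀ y, (y * V - L) % (U * V) < (H - L) % (U * V) ↔ (y - a) % U < c := by
  -- The wrapping interval `[L, H[` unwraps to `[L, H - U * V * q[`, whose right end has
  -- ceiling quotient `b - U * q`.
  set q := (H - L) / (U * V)
  have hD : L + (H - L) % (U * V) = H - U * V * q := by rw [emod_def]; ring
  have hd0 : 0 ≤ (H - L) % (U * V) := emod_nonneg _ (by positivity)
  have hdW : (H - L) % (U * V) < U * V := emod_lt_of_pos _ (by positivity)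
  have hcount := mul_sub_emod_lt_iff hU hV hLa haL (D := L + (H - L) % (U * V)) (b := b - U * q)
    (by rw [hD]; linarith) (by rw [hD]; linarith)
  refine ⟨b - U * q - a, ?_, fun y => by rw [← hcount, add_sub_cancel_left]⟩
  have hc0 : 0 ≤ b - U * q - a := by
    by_contra! h
    nlinarith
  have hcU : b - U * q - a ≤ U := by
    by_contra! h
    nlinarith
  rcases hcU.lt_or_eq with hlt | heq
  · left
    rw [← emod_eq_of_lt hc0 hlt, sub_right_comm, sub_mul_emod_self_left]
  · exact Or.inr heq

end Int

namespace BitVec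

theorem inInterval_iff_emod {w : ℕ} (t l h : BitVec w) :
    inInterval t l h ↔ ((t.toNat : ℤ) - l.toNat) % 2 ^ w < ((h.toNat : ℤ) - l.toNat) % 2 ^ w := by
  have hsub : ∀ x : BitVec w, (((x - l).toNat : ℕ) : ℤ) = ((x.toNat : ℤ) - l.toNat) % 2 ^ w := by
    intro x
    rw [toNat_sub, Int.natCast_emod, Nat.cast_add, Nat.cast_sub l.isLt.le]
    push_cast
    rw [show (2 : ℤ) ^ w - l.toNat + x.toNat = x.toNat - l.toNat + 2 ^ w by ring,
      Int.add_emod_right]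
  rw [inInterval, lt_def, ← Int.ofNat_lt, hsub, hsub]

theorem inInterval_iff_of_toNat_eq_emod {w : ℕ} {y ly hy : BitVec w} {a b : ℤ}
    (hl : (ly.toNat : ℤ) = a % 2 ^ w) (hh : (hy.toNat : ℤ) = b % 2 ^ w) :
    inInterval y ly hy ↔ ((y.toNat : ℤ) - a) % 2 ^ w < (b - a) % 2 ^ w := by
  rw [inInterval_iff_emod, hl, hh, Int.sub_emod_emod, Int.emod_sub_emod, Int.sub_emod_emod]

theorem toNat_append_eq_mul_add {u v : ℕ} (y : BitVec u) (n : BitVec v) :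
    (y ++ n).toNat = y.toNat * 2 ^ v + n.toNat := by
  rw [toNat_append, ← Nat.shiftLeft_add_eq_or_of_lt n.isLt, Nat.shiftLeft_eq]

end BitVec

def offset {u v : ℕ} (n : BitVec v) (β : BitVec (u + v)) : ℤ :=
  ((β.toNat : ℤ) - n.toNat) % 2 ^ (u + v)

theorem toNat_βy {u v : ℕ} (n : BitVec v) (β : BitVec (u + v)) :
    ((βy (u := u) n β).toNat : ℤ) = (offset n β + (2 ^ v - 1)) / 2 ^ v % 2 ^ u := by
  have hn : n.toNat ≤ 2 ^ (u + v) := n.isLt.le.trans (Nat.pow_le_pow_right two_pos (by omega))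
  rw [βy, BitVec.toNat_ofNat]
  push_cast [hn, Nat.one_le_two_pow]
  rw [offset, show (β.toNat : ℤ) + (2 ^ (u + v) - n.toNat) = β.toNat - n.toNat + 2 ^ (u + v) by
    ring, Int.add_emod_right]

theorem inInterval_append_iff {u v : ℕ} (y : BitVec u) (n : BitVec v) (l h : BitVec (u + v)) :
    inInterval (y ++ n) l h ↔
      ((y.toNat : ℤ) * 2 ^ v - offset n l) % (2 ^ u * 2 ^ v) <
        (offset n h - offset n l) % (2 ^ u * 2 ^ v) := by
  rw [BitVec.inInterval_iff_emod, BitVec.toNat_append_eq_mul_add, offset, offset, ← pow_add,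
    Int.sub_emod_emod, Int.emod_sub_emod, Int.sub_emod_emod]
  push_cast
  ring_nf

theorem forbidden_interval_project_high_fixed_low_general (u v : ℕ)
    (n : BitVec v) (l h : BitVec (u + v)) :
    (βy (u := u) n l ≠ βy (u := u) n h →
      ∀ y : BitVec u, ¬ inInterval (y ++ n) l h →
        ¬ inInterval y (βy (u := u) n l) (βy (u := u) n h)) ∧
    (βy (u := u) n l = βy (u := u) n h →
      inInterval (βy (u := u) n h ++ n) l h →
        ∀ y : BitVec u, inInterval (y ++ n) l h) := by
  have hU : (0 : ℤ) < 2 ^ u := by positivity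
  have hV : (0 : ℤ) < 2 ^ v := by positivity
  set a := (offset n l + (2 ^ v - 1)) / 2 ^ v
  set b := (offset n h + (2 ^ v - 1)) / 2 ^ v
  obtain ⟨c, hc, hcount⟩ := Int.exists_mul_sub_emod_lt_iff hU hV
    (Int.le_add_sub_one_ediv_mul _ hV) (Int.add_sub_one_ediv_mul_lt _ hV)
    (Int.le_add_sub_one_ediv_mul _ hV) (Int.add_sub_one_ediv_mul_lt _ hV)
  have hmem (y : BitVec u) : inInterval (y ++ n) l h ↔ ((y.toNat : ℤ) - a) % 2 ^ u < c := by
    rw [inInterval_append_iff, hcount]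
  have hproj (y : BitVec u) :
      inInterval y (βy n l) (βy n h) ↔ ((y.toNat : ℤ) - a) % 2 ^ u < (b - a) % 2 ^ u :=
    BitVec.inInterval_iff_of_toNat_eq_emod (toNat_βy n l) (toNat_βy n h)
  refine ⟨fun _ y hy hyproj => hy ((hmem y).2 ?_), fun hlh hhn y => (hmem y).2 ?_⟩
  · rcases hc with rfl | rfl
    exacts [(hproj y).1 hyproj, Int.emod_lt_of_pos _ hU]
  · have hab : (b - a) % 2 ^ u = 0 := by
      rw [Int.sub_emod, ← toNat_βy, ← toNat_βy, hlh, sub_self, Int.zero_emod]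
    rcases hc with rfl | rfl
    · exact absurd ((hmem _).1 hhn) (hab ▸ not_lt.2 (Int.emod_nonneg _ hU.ne'))
    · exact Int.emod_lt_of_pos _ hU

/-- Projection of a forbidden interval when the low sub-slice is fixed to `n`. -/
theorem forbidden_interval_project_high_fixed_low (u v : ℕ) (hu : 1 ≤ u) (hv : 1 ≤ v)
    (n : BitVec v) (l h : BitVec (u + v)) :
    (βy (u := u) n l ≠ βy (u := u) n h →
      ∀ y : BitVec u, ¬ inInterval (y ++ n) l h →
        ¬ inInterval y (βy (u := u) n l) (βy (u := u) n h)) ∧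
    (βy (u := u) n l = βy (u := u) n h →
      inInterval (βy (u := u) n h ++ n) l h →
        ∀ y : BitVec u, inInterval (y ++ n) l h) :=
  forbidden_interval_project_high_fixed_low_general u v n l h
end

section
/- Projection of a forbidden interval when the high sub-slice is fixed (Lemma 2, parts (5)–(6)): let u, v ≥ 1, let n : BitVec u be fixed, let l, h : BitVec (u+v), and define, for β ∈ {l, h}, the bit-vector β_z : BitVec v by β_z.toNat = β.toNat mod 2^v if ⌊β.toNat / 2^v⌋ = n.toNat, and β_z = 0 otherwise. Then: (i) if l_z ≠ h_z, then for every z : BitVec v with n ++ z ∉ [l,h[ one has z ∉ [l_z, h_z[; (ii) if l_z = h_z and n ++ (0 : BitVec v) ∈ [l,h[, then every z : BitVec v satisfies n ++ z ∈ [l,h[ (so the constraint x ∉ [l,h[ together with the fixed high slice n is unsatisfiable). -/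
/-- `βz n β` equals `β mod 2^v` if the high part of `β` equals `n`, and `0` otherwise. -/
def βz {u v : ℕ} (n : BitVec u) (β : BitVec (u + v)) : BitVec v :=
  if β.toNat / 2 ^ v = n.toNat then BitVec.ofNat v (β.toNat % 2 ^ v) else 0

/-!
The values `n ++ z` form a contiguous block of `2 ^ v` naturals, and the wrapping interval
`[l, h[` can only start or stop inside that block at `l` or at `h`; `β_z` is the position of
`β` inside the block when `β` lies in it. So the block meets `[l, h[` exactly in
`n ++ [l_z, h_z[`, unless `l_z = h_z`, in which case no boundary splits the block and it lies
entirely inside or entirely outside `[l, h[`. Comparing naturals lexicographically by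
`(x / 2 ^ v, x % 2 ^ v)` turns this case analysis into linear arithmetic.
-/

def InCyclicIco (t l h : ℕ) : Prop := l ≤ t ∧ t < h ∨ h < l ∧ (l ≤ t ∨ t < h)

theorem inInterval_iff_inCyclicIco {w : ℕ} (t l h : BitVec w) :
    inInterval t l h ↔ InCyclicIco t.toNat l.toNat h.toNat := by
  unfold inInterval InCyclicIco
  rw [BitVec.lt_def]
  have hsub {x y : BitVec w} : (x - y).toNat = if y.toNat ≤ x.toNat then x.toNat - y.toNat
      else 2 ^ w - (y.toNat - x.toNat) := by
    split_ifs with hyx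
    · exact BitVec.toNat_sub_of_le hyx
    · exact BitVec.toNat_sub_of_lt (by rw [BitVec.lt_def]; omega)
  rw [hsub, hsub]
  split_ifs <;> bv_omega

theorem Nat.lt_iff_div_lt_or_div_eq_and_mod_lt {q : ℕ} (hq : 0 < q) (x y : ℕ) :
    x < y ↔ x / q < y / q ∨ x / q = y / q ∧ x % q < y % q := by
  have hx := Nat.div_add_mod x q
  have hy := Nat.div_add_mod y q
  have := Nat.mod_lt x hq
  have := Nat.mod_lt y hq
  constructor
  · intro hxy
    rcases lt_trichotomy (x / q) (y / q) with h | h | h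
    · exact Or.inl h
    · exact Or.inr ⟨h, by rw [h] at hx; omega⟩
    · have := Nat.mul_le_mul_left q h; rw [Nat.mul_succ] at this; omega
  · rintro (h | ⟨h, h'⟩)
    · have := Nat.mul_le_mul_left q h; rw [Nat.mul_succ] at this; omega
    · rw [h] at hx; omega

theorem inCyclicIco_mul_add_iff {q n z l h : ℕ} (hq : 0 < q) (hz : z < q) :
    InCyclicIco (n * q + z) l h ↔
      InCyclicIco z (if l / q = n then l % q else 0) (if h / q = n then h % q else 0) ∨
        ((if l / q = n then l % q else 0) = (if h / q = n then h % q else 0) ∧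
          InCyclicIco (n * q) l h) := by
  have lex := Nat.lt_iff_div_lt_or_div_eq_and_mod_lt hq
  have htdiv : (n * q + z) / q = n := by
    rw [Nat.add_comm, Nat.add_mul_div_right _ _ hq, Nat.div_eq_of_lt hz, Nat.zero_add]
  have htmod : (n * q + z) % q = z := by
    rw [Nat.add_comm, Nat.add_mul_mod_self_right, Nat.mod_eq_of_lt hz]
  have hmdiv : n * q / q = n := Nat.mul_div_cancel _ hq
  have hmmod : n * q % q = 0 := Nat.mul_mod_left _ _
  have := Nat.mod_lt l hq
  have := Nat.mod_lt h hq
  -- every comparison occurring in the goal, in both directions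
  have := lex l h; have := lex h l
  have := lex l (n * q + z); have := lex (n * q + z) l
  have := lex h (n * q + z); have := lex (n * q + z) h
  have := lex l (n * q); have := lex (n * q) l
  have := lex h (n * q); have := lex (n * q) h
  unfold InCyclicIco
  generalize n * q + z = t at *
  generalize n * q = m at *
  split_ifs <;> omega

theorem BitVec.toNat_append_eq_mul_add_s9 {u v : ℕ} (n : BitVec u) (z : BitVec v) :
    (n ++ z).toNat = n.toNat * 2 ^ v + z.toNat := by
  rw [BitVec.toNat_append, ← Nat.shiftLeft_add_eq_or_of_lt z.isLt, Nat.shiftLeft_eq]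

theorem toNat_βz {u v : ℕ} (n : BitVec u) (β : BitVec (u + v)) :
    (βz n β).toNat = if β.toNat / 2 ^ v = n.toNat then β.toNat % 2 ^ v else 0 := by
  unfold βz
  split_ifs <;> simp

theorem inInterval_append_iff_s9 {u v : ℕ} (n : BitVec u) (z : BitVec v) (l h : BitVec (u + v)) :
    inInterval (n ++ z) l h ↔
      inInterval z (βz n l) (βz n h) ∨ (βz n l = βz n h ∧ inInterval (n ++ 0#v) l h) := by
  simp only [inInterval_iff_inCyclicIco, BitVec.toNat_append_eq_mul_add_s9, toNat_βz,
    ← BitVec.toNat_inj, BitVec.toNat_ofNat, Nat.zero_mod, Nat.add_zero]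
  exact inCyclicIco_mul_add_iff (Nat.two_pow_pos v) z.isLt

theorem forbidden_interval_project_low_fixed_high_general (u v : ℕ)
    (n : BitVec u) (l h : BitVec (u + v)) :
    (βz (v := v) n l ≠ βz (v := v) n h →
      ∀ z : BitVec v, ¬ inInterval (n ++ z) l h →
        ¬ inInterval z (βz (v := v) n l) (βz (v := v) n h)) ∧
    (βz (v := v) n l = βz (v := v) n h →
      inInterval (n ++ (0 : BitVec v)) l h →
        ∀ z : BitVec v, inInterval (n ++ z) l h) :=
  ⟨fun _ z hz hproj => hz ((inInterval_append_iff_s9 n z l h).2 (Or.inl hproj)),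
    fun heq h0 z => (inInterval_append_iff_s9 n z l h).2 (Or.inr ⟨heq, h0⟩)⟩

/-- Projection of a forbidden interval when the high sub-slice is fixed to `n`. -/
theorem forbidden_interval_project_low_fixed_high (u v : ℕ) (hu : 1 ≤ u) (hv : 1 ≤ v)
    (n : BitVec u) (l h : BitVec (u + v)) :
    (βz (v := v) n l ≠ βz (v := v) n h →
      ∀ z : BitVec v, ¬ inInterval (n ++ z) l h →
        ¬ inInterval z (βz (v := v) n l) (βz (v := v) n h)) ∧
    (βz (v := v) n l = βz (v := v) n h →
      inInterval (n ++ (0 : BitVec v)) l h →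
        ∀ z : BitVec v, inInterval (n ++ z) l h) :=
  forbidden_interval_project_low_fixed_high_general u v n l h
end

section
/- Saturation by transitivity through multiplication: for all p, q, r, x : BitVec w, if p ≤ᵤ x and q·x ≤ᵤ r, then Ovfl×(q, x) or p·q ≤ᵤ r. -/
/-- Saturation by transitivity through multiplication. -/
theorem saturation_trans_mul (w : ℕ) (p q r x : BitVec w)
    (h1 : p ≤ x) (h2 : q * x ≤ r) :
    2 ^ w ≤ q.toNat * x.toNat ∨ p * q ≤ r := by
  by_cases h : 2 ^ w ≤ q.toNat * x.toNat
  · exact Or.inl h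
  · right
    push_neg at h
    rw [BitVec.le_def] at h1 h2 ⊢
    rw [BitVec.toNat_mul] at h2 ⊢
    rw [Nat.mod_eq_of_lt h] at h2
    have hpq : p.toNat * q.toNat ≤ q.toNat * x.toNat := by
      rw [Nat.mul_comm q.toNat x.toNat]
      exact Nat.mul_le_mul_right _ h1
    rw [Nat.mod_eq_of_lt (lt_of_le_of_lt hpq h)]
    exact le_trans hpq h2
end

section
/- Incremental linearization lemmas: for all p, q : BitVec w: (i) if p·q = 1 then p = 1 or Ovfl×(p, q); (ii) if p·q = q then p = 1 or q = 0 or Ovfl×(p, q). -/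
/-- Incremental linearization lemmas for multiplication. -/
theorem incremental_linearization (w : ℕ) (p q : BitVec w) :
    (p * q = 1 → p = 1 ∨ 2 ^ w ≤ p.toNat * q.toNat) ∧
    (p * q = q → p = 1 ∨ q = 0 ∨ 2 ^ w ≤ p.toNat * q.toNat) := by
  rcases Nat.eq_zero_or_pos w with hw | hw
  · subst hw
    exact ⟨fun _ => Or.inl (Subsingleton.elim _ _),
           fun _ => Or.inl (Subsingleton.elim _ _)⟩
  by_cases hov : 2 ^ w ≤ p.toNat * q.toNat
  · exact ⟨fun _ => Or.inr hov, fun _ => Or.inr (Or.inr hov)⟩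
  push_neg at hov
  have hmul : (p * q).toNat = p.toNat * q.toNat := by
    rw [BitVec.toNat_mul, Nat.mod_eq_of_lt hov]
  have hw2 : 1 < 2 ^ w := Nat.one_lt_two_pow (by omega)
  have h1 : (1 : BitVec w).toNat = 1 := by
    simp [BitVec.toNat_ofNat, Nat.mod_eq_of_lt hw2]
  constructor
  · intro h
    left
    have : p.toNat * q.toNat = 1 := by rw [← hmul, h, h1]
    have hp : p.toNat = 1 := Nat.eq_one_of_mul_eq_one_right this
    exact BitVec.toNat_injective (by rw [hp, h1])
  · intro h
    by_cases hq : q = 0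
    · exact Or.inr (Or.inl hq)
    left
    have hqn : q.toNat ≠ 0 := fun hc => hq (BitVec.toNat_injective (by simp [hc]))
    have : p.toNat * q.toNat = q.toNat := by rw [← hmul, h]
    have hp : p.toNat = 1 := by
      have h2 : p.toNat * q.toNat = 1 * q.toNat := by rw [this, one_mul]
      exact Nat.eq_of_mul_eq_mul_right (Nat.pos_of_ne_zero hqn) h2
    exact BitVec.toNat_injective (by rw [hp, h1])
end

section
/- Most-significant-bit trichotomy for multiplication overflow: for all p, q : BitVec w with w ≥ 1: (i) if Msb(p) + Msb(q) ≥ w + 2 then Ovfl×(p, q); (ii) if Msb(p) + Msb(q) ≤ w then ¬Ovfl×(p, q); (iii) if Msb(p) + Msb(q) = w + 1, then Ovfl×(p, q) holds if and only if (zeroExtend (w+1) p) · (zeroExtend (w+1) q) ≥ᵤ 2^w, where the product and comparison are taken in BitVec (w+1). -/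
/-!
`Msb p` is the least `k` with `p.toNat < 2 ^ k`, so `2 ^ (Msb p - 1) ≤ p.toNat < 2 ^ Msb p`
once `p ≠ 0`. Multiplying these bounds places `p.toNat * q.toNat` in
`[2 ^ (Msb p + Msb q - 2), 2 ^ (Msb p + Msb q))`, which decides overflow except when
`Msb p + Msb q = w + 1`. In that case the exact product fits in `w + 1` bits, so the
`(w + 1)`-bit product computes it without wrapping.
-/

/-- One-based index of the most significant set bit: `Msb 0 = 0` and
`Msb p = Nat.log2 p.toNat + 1` for `p ≠ 0`. -/
def Msb {w : ℕ} (p : BitVec w) : ℕ :=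
  if p = 0 then 0 else Nat.log2 p.toNat + 1

section Msb

variable {w : ℕ}

theorem Msb_le_iff (p : BitVec w) (k : ℕ) : Msb p ≤ k ↔ p.toNat < 2 ^ k := by
  unfold Msb
  split_ifs with hp
  · simp [hp]
  · have hp' : p.toNat ≠ 0 := fun h => hp (BitVec.eq_of_toNat_eq (by simpa using h))
    rw [Nat.add_one_le_iff, Nat.log2_lt hp']

theorem lt_Msb_iff (p : BitVec w) (k : ℕ) : k < Msb p ↔ 2 ^ k ≤ p.toNat := by
  simpa only [not_le, not_lt] using (Msb_le_iff p k).not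

theorem toNat_lt_two_pow_Msb (p : BitVec w) : p.toNat < 2 ^ Msb p :=
  (Msb_le_iff p _).mp le_rfl

theorem Msb_le_width (p : BitVec w) : Msb p ≤ w :=
  (Msb_le_iff p w).mpr p.isLt

theorem toNat_mul_lt_two_pow_Msb_add (p q : BitVec w) :
    p.toNat * q.toNat < 2 ^ (Msb p + Msb q) := by
  rw [Nat.pow_add]
  exact Nat.mul_lt_mul'' (toNat_lt_two_pow_Msb p) (toNat_lt_two_pow_Msb q)

theorem two_pow_add_le_toNat_mul {p q : BitVec w} {a b : ℕ} (ha : a < Msb p) (hb : b < Msb q) :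
    2 ^ (a + b) ≤ p.toNat * q.toNat := by
  rw [Nat.pow_add]
  exact Nat.mul_le_mul ((lt_Msb_iff p a).mp ha) ((lt_Msb_iff q b).mp hb)

end Msb

theorem BitVec.toNat_setWidth_mul_setWidth {w v : ℕ} (p q : BitVec w) (hwv : w ≤ v)
    (h : p.toNat * q.toNat < 2 ^ v) :
    (p.setWidth v * q.setWidth v).toNat = p.toNat * q.toNat := by
  have hpow : 2 ^ w ≤ 2 ^ v := Nat.pow_le_pow_right two_pos hwv
  rw [toNat_mul, toNat_setWidth, toNat_setWidth,
    Nat.mod_eq_of_lt (p.isLt.trans_le hpow), Nat.mod_eq_of_lt (q.isLt.trans_le hpow),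
    Nat.mod_eq_of_lt h]

theorem msb_ovfl_trichotomy_general (w : ℕ) (p q : BitVec w) :
    (w + 2 ≤ Msb p + Msb q → 2 ^ w ≤ p.toNat * q.toNat) ∧
    (Msb p + Msb q ≤ w → ¬ (2 ^ w ≤ p.toNat * q.toNat)) ∧
    (Msb p + Msb q = w + 1 →
      (2 ^ w ≤ p.toNat * q.toNat ↔
        BitVec.ofNat (w + 1) (2 ^ w) ≤ p.zeroExtend (w + 1) * q.zeroExtend (w + 1))) := by
  have hlt := toNat_mul_lt_two_pow_Msb_add p q
  refine ⟨fun h => ?_, fun h => ?_, fun h => ?_⟩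
  · have hp := Msb_le_width p
    have hq := Msb_le_width q
    calc 2 ^ w ≤ 2 ^ ((Msb p - 1) + (Msb q - 1)) := Nat.pow_le_pow_right two_pos (by omega)
      _ ≤ p.toNat * q.toNat := two_pow_add_le_toNat_mul (by omega) (by omega)
  · exact not_le.mpr (hlt.trans_le (Nat.pow_le_pow_right two_pos h))
  · rw [h] at hlt
    rw [BitVec.le_def, BitVec.toNat_ofNat, Nat.mod_eq_of_lt (Nat.pow_lt_pow_succ one_lt_two),
      BitVec.toNat_setWidth_mul_setWidth p q (Nat.le_succ w) hlt]

/-- Most-significant-bit trichotomy for multiplication overflow. -/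
theorem msb_ovfl_trichotomy (w : ℕ) (hw : 1 ≤ w) (p q : BitVec w) :
    (w + 2 ≤ Msb p + Msb q → 2 ^ w ≤ p.toNat * q.toNat) ∧
    (Msb p + Msb q ≤ w → ¬ (2 ^ w ≤ p.toNat * q.toNat)) ∧
    (Msb p + Msb q = w + 1 →
      (2 ^ w ≤ p.toNat * q.toNat ↔
        BitVec.ofNat (w + 1) (2 ^ w) ≤ p.zeroExtend (w + 1) * q.zeroExtend (w + 1))) :=
  msb_ovfl_trichotomy_general w p q
end

section
/- Soundness of the PolySAT interval-conflict lemma (covering property of chained forbidden intervals): let w ≥ 1, let n ≥ 1, and let l, h : Fin n → BitVec w define wrapping intervals I_i := [l i, h i[ over BitVec w. If for every i ∈ Fin n one has h i ∈ I_{i+1} (indices taken cyclically modulo n), then the intervals cover the whole domain: for every x : BitVec w there exists i ∈ Fin n with x ∈ I_i. -/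
lemma toNat_sub_cases {w : ℕ} (a b : BitVec w) :
    (a - b).toNat = if b.toNat ≤ a.toNat then a.toNat - b.toNat
      else 2 ^ w + a.toNat - b.toNat := by
  have ha := a.isLt
  have hb := b.isLt
  rw [BitVec.toNat_sub]
  split
  · have : 2 ^ w - b.toNat + a.toNat = 2 ^ w + (a.toNat - b.toNat) := by omega
    rw [this, Nat.add_mod_left, Nat.mod_eq_of_lt (by omega)]
  · rw [Nat.mod_eq_of_lt (by omega)]
    omega

lemma step {w : ℕ} (x hi l' h' : BitVec w) (h1 : hi - l' < h' - l')
    (h2 : ¬ (x - l' < h' - l')) : (x - h').toNat < (x - hi).toNat := by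
  have hx := x.isLt
  have hh := h'.isLt
  have hhi := hi.isLt
  have hl := l'.isLt
  rw [BitVec.lt_def] at h1 h2
  rw [toNat_sub_cases] at h1 h2 ⊢
  rw [toNat_sub_cases] at h1 h2
  rw [toNat_sub_cases x hi]
  split_ifs at * <;> omega

/-- Soundness of the PolySAT interval-conflict lemma: if, cyclically, each upper bound
`h i` lies in the next interval, then the intervals cover the whole domain. -/
theorem interval_conflict_covers (w n : ℕ) (hw : 1 ≤ w) (hn : 1 ≤ n)
    (l h : Fin n → BitVec w)
    (hchain : ∀ i : Fin n,
      inInterval (h i) (l ⟨(i.val + 1) % n, Nat.mod_lt _ (by omega)⟩)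
        (h ⟨(i.val + 1) % n, Nat.mod_lt _ (by omega)⟩)) :
    ∀ x : BitVec w, ∃ i : Fin n, inInterval x (l i) (h i) := by
  intro x
  by_contra hc
  push_neg at hc
  simp only [inInterval] at hc hchain
  set d : Fin n → ℕ := fun i => (x - h i).toNat with hd
  have hne : (Finset.univ : Finset (Fin n)).Nonempty := by
    exact ⟨⟨0, by omega⟩, Finset.mem_univ _⟩
  obtain ⟨i, -, hmin⟩ := Finset.exists_min_image Finset.univ d hne
  set j : Fin n := ⟨(i.val + 1) % n, Nat.mod_lt _ (by omega)⟩ with hj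
  have hstep : d j < d i := step x (h i) (l j) (h j) (hchain i) (hc j)
  exact absurd (hmin j (Finset.mem_univ _)) (by omega)
end
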